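/- Let p be a partition of a disjoint union [k] ⊔ [l] (k upper points, l lower points). Define the strict order ≺ on global-outer blocks by: upper single-layer blocks first (ordered by decreasing maximum), then the through-blocks, then lower single-layer blocks (ordered by increasing maximum). Then ≺ is a strict total order on the set of global-outer blocks of p. -/

import Mathlib

namespace Stmt7

/-- A block (given by its upper-row part and lower-row part) is upper single-layer. -/
def UpperSL (B : Finset ℕ × Finset ℕ) : Prop := B.1.Nonempty ∧ B.2 = ∅

/-- A block is lower single-layer. -/
def LowerSL (B : Finset ℕ × Finset ℕ) : Prop := B.1 = ∅ ∧ B.2.Nonempty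

/-- The span of a block, as a set of points `(0, i)` (upper row) and `(1, j)` (lower row):
for a through-block it is the union of the initial segments of the two rows up to the
respective maxima; for a single-layer block it is the interval `[min B, max B]` of its row. -/
def Span (B : Finset ℕ × Finset ℕ) : Set (ℕ × ℕ) :=
  {x | (B.1.Nonempty ∧ B.2.Nonempty ∧
          ((x.1 = 0 ∧ 1 ≤ x.2 ∧ ∃ m ∈ B.1, x.2 ≤ m) ∨
           (x.1 = 1 ∧ 1 ≤ x.2 ∧ ∃ m ∈ B.2, x.2 ≤ m))) ∨
       (B.1.Nonempty ∧ B.2 = ∅ ∧ x.1 = 0 ∧ (∃ a ∈ B.1, a ≤ x.2) ∧ ∃ b ∈ B.1, x.2 ≤ b) ∨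
       (B.1 = ∅ ∧ B.2.Nonempty ∧ x.1 = 1 ∧ (∃ a ∈ B.2, a ≤ x.2) ∧ ∃ b ∈ B.2, x.2 ≤ b)}

/-- A block of `p` is global-outer if its span is not strictly contained in the span of
any other block of `p`. -/
def GlobalOuter (p : Finset (Finset ℕ × Finset ℕ)) (B : Finset ℕ × Finset ℕ) : Prop :=
  B ∈ p ∧ ¬ ∃ C ∈ p, C ≠ B ∧ Span B ⊂ Span C

/-- The order `≺`: upper single-layer blocks first (by decreasing maximum), then
through-blocks, then lower single-layer blocks (by increasing maximum). -/
def Prec (B C : Finset ℕ × Finset ℕ) : Prop :=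
  (UpperSL B ∧ UpperSL C ∧ ∃ m ∈ B.1, ∀ c ∈ C.1, c < m) ∨
  (UpperSL B ∧ ¬ UpperSL C) ∨
  (LowerSL C ∧ ¬ LowerSL B) ∨
  (LowerSL B ∧ LowerSL C ∧ ∃ m ∈ C.2, ∀ b ∈ B.2, b < m)

/-- Linearisation of the two-row diagram: upper points `1,…,k`, then the lower points
taken right-to-left. -/
def lin (k l : ℕ) (B : Finset ℕ × Finset ℕ) : Finset ℕ :=
  B.1 ∪ B.2.image fun j => k + (l + 1 - j)

/-!
The relation `≺` is the pull-back of the lexicographic order along the key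
(layer, ∓ maximum), so it is a strict order, and it is total on global-outer blocks as soon as
the key is injective there. Two single-layer blocks of the same layer with the same key share
their maximum, hence coincide. All through-blocks share one key; but if two distinct global-outer
through-blocks `B`, `C` had `max B.1 < max C.1`, then `max C.2 < max B.2` (otherwise the span
of `B` would lie strictly inside that of `C`), and these four maxima make `B` and `C` cross.
-/

open Finset

lemma sup_id_mem {α : Type*} [LinearOrder α] [OrderBot α] {s : Finset α} (hs : s.Nonempty) :
    s.sup id ∈ s := by
  obtain ⟨i, hi, he⟩ := s.exists_mem_eq_sup hs id
  exact he ▸ hi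

lemma exists_mem_forall_lt_iff {α : Type*} [LinearOrder α] [OrderBot α]
    {s t : Finset α} (ht : t.Nonempty) :
    (∃ m ∈ s, ∀ c ∈ t, c < m) ↔ ∃ m ∈ s, t.sup id < m := by
  refine exists_congr fun m => and_congr_right fun _ => ⟨fun h => h _ (sup_id_mem ht), ?_⟩
  exact fun h c hc => (le_sup (f := id) hc).trans_lt h

lemma UpperSL.not_lowerSL {B : Finset ℕ × Finset ℕ} (h : UpperSL B) : ¬ LowerSL B :=
  fun h' => h.1.ne_empty h'.1

open Classical in
noncomputable def precKey (B : Finset ℕ × Finset ℕ) : ℕ ×ₗ ℤ :=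
  if UpperSL B then toLex (0, -((B.1.sup id : ℕ) : ℤ))
  else if LowerSL B then toLex (2, ((B.2.sup id : ℕ) : ℤ))
  else toLex (1, 0)

lemma prec_iff_precKey_lt (B C : Finset ℕ × Finset ℕ) : Prec B C ↔ precKey B < precKey C := by
  have hB := @UpperSL.not_lowerSL B
  have hC := @UpperSL.not_lowerSL C
  by_cases hBU : UpperSL B <;> by_cases hBL : LowerSL B <;>
    by_cases hCU : UpperSL C <;> by_cases hCL : LowerSL C <;>
    simp_all [Prec, precKey, Prod.Lex.toLex_lt_toLex]
  exacts [exists_mem_forall_lt_iff hCU.1, exists_mem_forall_lt_iff hBL.2]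

lemma through_of_not_upperSL_of_not_lowerSL {B : Finset ℕ × Finset ℕ}
    (hne : B.1.Nonempty ∨ B.2.Nonempty) (hU : ¬ UpperSL B) (hL : ¬ LowerSL B) :
    B.1.Nonempty ∧ B.2.Nonempty := by
  simp only [UpperSL, LowerSL, ← Finset.not_nonempty_iff_eq_empty] at hU hL
  tauto

lemma mem_span_of_through {B : Finset ℕ × Finset ℕ} (h1 : B.1.Nonempty) (h2 : B.2.Nonempty)
    (x : ℕ × ℕ) :
    x ∈ Span B ↔ (x.1 = 0 ∧ 1 ≤ x.2 ∧ x.2 ≤ B.1.sup id) ∨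
      (x.1 = 1 ∧ 1 ≤ x.2 ∧ x.2 ≤ B.2.sup id) := by
  simp only [Span, Set.mem_ofPred_eq, h1, h2, h1.ne_empty, h2.ne_empty, true_and, false_and,
    and_false, or_false]
  refine or_congr ?_ ?_ <;>
    exact and_congr_right fun _ => and_congr_right fun hx => (Finset.le_sup_iff hx).symm

lemma span_ssubset_span_of_through {B C : Finset ℕ × Finset ℕ} (hB1 : B.1.Nonempty)
    (hB2 : B.2.Nonempty) (hC1 : C.1.Nonempty) (hC2 : C.2.Nonempty)
    (h1 : B.1.sup id < C.1.sup id) (h2 : B.2.sup id ≤ C.2.sup id) : Span B ⊂ Span C := by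
  refine ⟨fun x hx => ?_, fun hCB => ?_⟩
  · rw [mem_span_of_through hB1 hB2] at hx
    rw [mem_span_of_through hC1 hC2]
    omega
  · have hmax := hCB ((mem_span_of_through hC1 hC2 (0, C.1.sup id)).2
      (Or.inl ⟨rfl, by omega, le_rfl⟩))
    rw [mem_span_of_through hB1 hB2] at hmax
    omega

def NonCrossing (k l : ℕ) (p : Finset (Finset ℕ × Finset ℕ)) : Prop :=
  ¬ ∃ B ∈ p, ∃ C ∈ p, B ≠ C ∧ ∃ a ∈ lin k l B, ∃ b ∈ lin k l C,
      ∃ c ∈ lin k l B, ∃ d ∈ lin k l C, a < b ∧ b < c ∧ c < d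

section Partition

variable {k l : ℕ} {p : Finset (Finset ℕ × Finset ℕ)} {B C : Finset ℕ × Finset ℕ}

lemma NonCrossing.sup_snd_le_of_sup_fst_lt (hnc : NonCrossing k l p)
    (hsub : ∀ B ∈ p, B.1 ⊆ Icc 1 k ∧ B.2 ⊆ Icc 1 l) (hB : B ∈ p) (hC : C ∈ p) (hBC : B ≠ C)
    (hB1 : B.1.Nonempty) (hB2 : B.2.Nonempty) (hC1 : C.1.Nonempty) (hC2 : C.2.Nonempty)
    (h1 : B.1.sup id < C.1.sup id) : B.2.sup id ≤ C.2.sup id := by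
  by_contra! h2
  -- `lin` reverses the lower row, so the four maxima of `B` and `C` alternate.
  have hCk := (mem_Icc.1 ((hsub C hC).1 (sup_id_mem hC1))).2
  have hBl := (mem_Icc.1 ((hsub B hB).2 (sup_id_mem hB2))).2
  refine hnc ⟨B, hB, C, hC, hBC, _, mem_union_left _ (sup_id_mem hB1),
    _, mem_union_left _ (sup_id_mem hC1),
    _, mem_union_right _ (mem_image_of_mem _ (sup_id_mem hB2)),
    _, mem_union_right _ (mem_image_of_mem _ (sup_id_mem hC2)), h1, ?_, ?_⟩ <;> omega

lemma GlobalOuter.sup_fst_le (hnc : NonCrossing k l p)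
    (hsub : ∀ B ∈ p, B.1 ⊆ Icc 1 k ∧ B.2 ⊆ Icc 1 l) (hB : GlobalOuter p B) (hC : C ∈ p)
    (hBC : B ≠ C) (hB1 : B.1.Nonempty) (hB2 : B.2.Nonempty) (hC1 : C.1.Nonempty)
    (hC2 : C.2.Nonempty) : C.1.sup id ≤ B.1.sup id := by
  by_contra! h1
  exact hB.2 ⟨C, hC, hBC.symm, span_ssubset_span_of_through hB1 hB2 hC1 hC2 h1
    (hnc.sup_snd_le_of_sup_fst_lt hsub hB.1 hC hBC hB1 hB2 hC1 hC2 h1)⟩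

lemma eq_of_sup_fst_eq (hsub : ∀ B ∈ p, B.1 ⊆ Icc 1 k ∧ B.2 ⊆ Icc 1 l)
    (hpartU : ∀ i ∈ Icc 1 k, ∃! B, B ∈ p ∧ i ∈ B.1) (hB : B ∈ p) (hC : C ∈ p)
    (hB1 : B.1.Nonempty) (hC1 : C.1.Nonempty) (h : B.1.sup id = C.1.sup id) : B = C :=
  (hpartU _ ((hsub B hB).1 (sup_id_mem hB1))).unique ⟨hB, sup_id_mem hB1⟩
    ⟨hC, h ▸ sup_id_mem hC1⟩

lemma eq_of_sup_snd_eq (hsub : ∀ B ∈ p, B.1 ⊆ Icc 1 k ∧ B.2 ⊆ Icc 1 l)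
    (hpartL : ∀ j ∈ Icc 1 l, ∃! B, B ∈ p ∧ j ∈ B.2) (hB : B ∈ p) (hC : C ∈ p)
    (hB2 : B.2.Nonempty) (hC2 : C.2.Nonempty) (h : B.2.sup id = C.2.sup id) : B = C :=
  (hpartL _ ((hsub B hB).2 (sup_id_mem hB2))).unique ⟨hB, sup_id_mem hB2⟩
    ⟨hC, h ▸ sup_id_mem hC2⟩

lemma GlobalOuter.eq_of_through (hnc : NonCrossing k l p)
    (hsub : ∀ B ∈ p, B.1 ⊆ Icc 1 k ∧ B.2 ⊆ Icc 1 l)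
    (hpartU : ∀ i ∈ Icc 1 k, ∃! B, B ∈ p ∧ i ∈ B.1) (hB : GlobalOuter p B)
    (hC : GlobalOuter p C) (hB1 : B.1.Nonempty) (hB2 : B.2.Nonempty) (hC1 : C.1.Nonempty)
    (hC2 : C.2.Nonempty) : B = C := by
  by_contra hBC
  refine hBC (eq_of_sup_fst_eq hsub hpartU hB.1 hC.1 hB1 hC1 (le_antisymm ?_ ?_))
  · exact hC.sup_fst_le hnc hsub hB.1 (Ne.symm hBC) hC1 hC2 hB1 hB2
  · exact hB.sup_fst_le hnc hsub hC.1 hBC hB1 hB2 hC1 hC2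

lemma precKey_injOn (hne : ∀ B ∈ p, B.1.Nonempty ∨ B.2.Nonempty)
    (hsub : ∀ B ∈ p, B.1 ⊆ Icc 1 k ∧ B.2 ⊆ Icc 1 l)
    (hpartU : ∀ i ∈ Icc 1 k, ∃! B, B ∈ p ∧ i ∈ B.1)
    (hpartL : ∀ j ∈ Icc 1 l, ∃! B, B ∈ p ∧ j ∈ B.2) (hnc : NonCrossing k l p) :
    Set.InjOn precKey {B | GlobalOuter p B} := by
  intro B hB C hC hkey
  unfold precKey at hkey
  split_ifs at hkey with hBU hCU hCL hBL hCU hCL hCU hCL <;>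
    obtain ⟨⟨⟩, hsup⟩ := Prod.mk.inj (toLex.injective hkey)
  · exact eq_of_sup_fst_eq hsub hpartU hB.1 hC.1 hBU.1 hCU.1 (by omega)
  · exact eq_of_sup_snd_eq hsub hpartL hB.1 hC.1 hBL.2 hCL.2 (by omega)
  · obtain ⟨hB1, hB2⟩ := through_of_not_upperSL_of_not_lowerSL (hne B hB.1) hBU hBL
    obtain ⟨hC1, hC2⟩ := through_of_not_upperSL_of_not_lowerSL (hne C hC.1) hCU hCL
    exact hB.eq_of_through hnc hsub hpartU hC hB1 hB2 hC1 hC2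

end Partition

theorem stmt7 (k l : ℕ) (p : Finset (Finset ℕ × Finset ℕ))
    (hne : ∀ B ∈ p, B.1.Nonempty ∨ B.2.Nonempty)
    (hsub : ∀ B ∈ p, B.1 ⊆ Finset.Icc 1 k ∧ B.2 ⊆ Finset.Icc 1 l)
    (hpartU : ∀ i ∈ Finset.Icc 1 k, ∃! B, B ∈ p ∧ i ∈ B.1)
    (hpartL : ∀ j ∈ Finset.Icc 1 l, ∃! B, B ∈ p ∧ j ∈ B.2)
    (hnc : ¬ ∃ B ∈ p, ∃ C ∈ p, B ≠ C ∧ ∃ a ∈ lin k l B, ∃ b ∈ lin k l C,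
      ∃ c ∈ lin k l B, ∃ d ∈ lin k l C, a < b ∧ b < c ∧ c < d) :
    IsStrictTotalOrder {B // GlobalOuter p B} fun X Y => Prec X.1 Y.1 := by
  have hinj : Function.Injective fun X : {B // GlobalOuter p B} => precKey X.1 :=
    fun X Y h => Subtype.ext (precKey_injOn hne hsub hpartU hpartL hnc X.2 Y.2 h)
  convert hinj.isStrictTotalOrder_onFun (r := (· < ·)) using 1
  exact funext₂ fun X Y => propext (prec_iff_precKey_lt X.1 Y.1)

end Stmt7
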